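/- For (z,w), (z′,w′) ∈ ℂ², one has σ(z,w) = σ(z′,w′) if and only if (z′,w′) = e^{iθ}·(z,w) for some θ ∈ ℝ; that is, the fibres of σ are exactly the S¹-orbits in ℂ². -/

import Mathlib

/-- The action of `e^{iθ} ∈ S¹` on `ℂ²`, `e^{iθ}·(z,w) = (e^{iθ}z, e^{−iθ}w)`. -/
noncomputable def circleAct (θ : ℝ) (p : ℂ × ℂ) : ℂ × ℂ :=
  (Complex.exp (θ * Complex.I) * p.1, Complex.exp (-θ * Complex.I) * p.2)

/-- The invariant map `σ = (σ₁,σ₂,σ₃,σ₄) : ℂ² → ℝ⁴` with `σ₁ + iσ₂ = zw`,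
`σ₃ = ½(|z|² − |w|²)`, `σ₄ = ½(|z|² + |w|²)`. -/
noncomputable def sigmaMap4 (p : ℂ × ℂ) : Fin 4 → ℝ :=
  ![(p.1 * p.2).re, (p.1 * p.2).im,
    (‖p.1‖ ^ 2 - ‖p.2‖ ^ 2) / 2,
    (‖p.1‖ ^ 2 + ‖p.2‖ ^ 2) / 2]

/-!
`σ` records exactly the product `zw` and the moduli `|z|`, `|w|` (from `σ₄ ± σ₃`). Conversely,
two complex numbers of equal modulus differ by a unit `e^{iθ}`; rotating `z` into `z'` this way
forces `w' = zw / z' = e^{−iθ} w` when `z ≠ 0`, while for `z = 0` only `w` has to be rotated.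
-/

open Complex

theorem Complex.exists_exp_mul_eq_of_norm_eq {a b : ℂ} (h : ‖a‖ = ‖b‖) :
    ∃ θ : ℝ, b = exp (θ * I) * a := by
  rcases eq_or_ne a 0 with rfl | ha
  · exact ⟨0, by simpa using h.symm⟩
  · have hnorm : ‖b / a‖ = 1 := by rw [norm_div, ← h, div_self (norm_ne_zero_iff.mpr ha)]
    obtain ⟨θ, hθ⟩ := (norm_eq_one_iff _).mp hnorm
    exact ⟨θ, by rw [hθ, div_mul_cancel₀ _ ha]⟩

theorem circleAct_eq (θ : ℝ) (p : ℂ × ℂ) :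
    circleAct θ p = (exp (θ * I) * p.1, (exp (θ * I))⁻¹ * p.2) := by
  rw [circleAct, neg_mul, exp_neg]

theorem sigmaMap4_eq_iff {p q : ℂ × ℂ} :
    sigmaMap4 p = sigmaMap4 q ↔ p.1 * p.2 = q.1 * q.2 ∧ ‖p.1‖ = ‖q.1‖ ∧ ‖p.2‖ = ‖q.2‖ := by
  simp only [sigmaMap4, funext_iff, Fin.forall_fin_succ, IsEmpty.forall_iff,
    Matrix.cons_val_zero, Matrix.cons_val_succ, Complex.ext_iff, and_true]
  constructor
  · rintro ⟨hre, him, hdiff, hsum⟩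
    refine ⟨⟨hre, him⟩, ?_, ?_⟩ <;> rw [← sq_eq_sq₀ (norm_nonneg _) (norm_nonneg _)] <;> linarith
  · rintro ⟨⟨hre, him⟩, h₁, h₂⟩
    exact ⟨hre, him, by rw [h₁, h₂], by rw [h₁, h₂]⟩

theorem sigmaMap4_circleAct (θ : ℝ) (p : ℂ × ℂ) : sigmaMap4 (circleAct θ p) = sigmaMap4 p := by
  have hunit : exp (θ * I) ≠ 0 := exp_ne_zero _
  refine sigmaMap4_eq_iff.mpr ⟨?_, ?_, ?_⟩ <;>
    simp only [circleAct_eq, norm_mul, norm_inv, norm_exp_ofReal_mul_I, inv_one, one_mul]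
  field_simp

theorem exists_circleAct_eq_of_sigmaMap4_eq {p q : ℂ × ℂ} (h : sigmaMap4 p = sigmaMap4 q) :
    ∃ θ : ℝ, q = circleAct θ p := by
  obtain ⟨hmul, h₁, h₂⟩ := sigmaMap4_eq_iff.mp h
  rcases eq_or_ne p.1 0 with hp | hp
  · obtain ⟨φ, hφ⟩ := exists_exp_mul_eq_of_norm_eq h₂
    have hq : q.1 = 0 := norm_eq_zero.mp (by rw [← h₁, hp, norm_zero])
    refine ⟨-φ, Prod.ext ?_ ?_⟩
    · simp [circleAct, hp, hq]
    · simp [circleAct, hφ]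
  · obtain ⟨θ, hθ⟩ := exists_exp_mul_eq_of_norm_eq h₁
    refine ⟨θ, Prod.ext hθ ?_⟩
    rw [circleAct_eq, eq_inv_mul_iff_mul_eq₀ (exp_ne_zero _)]
    apply mul_left_cancel₀ hp
    rw [hmul, hθ]
    ring

/-- The fibres of `σ` are exactly the `S¹`-orbits in `ℂ²`. -/
theorem sigma4_fibres_eq_orbits (p q : ℂ × ℂ) :
    sigmaMap4 p = sigmaMap4 q ↔ ∃ θ : ℝ, q = circleAct θ p := by
  constructor
  · exact exists_circleAct_eq_of_sigmaMap4_eq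
  · rintro ⟨θ, rfl⟩
    exact (sigmaMap4_circleAct θ p).symm
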